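/- Let M be the closed hyperplane of JH_∞ spanned by the functions vanishing at the root. Then M* has the w*-strong diameter two property: every convex combination Σᵢ₌₁ⁿ λᵢ S(B_{M*}, xᵢ, ε) of w*-slices of the closed unit ball of M* has diameter 2. -/

import Mathlib

/-!
`M` is octahedral, which is what the w*-strong diameter two property of `M*` amounts to.
Approximate the points `xᵢ` of the unit sphere by finitely supported `cᵢ` and fix admissible
families nearly norming each `cᵢ`. A leaf `t₀ = Kᴸ` spelled with a fresh letter `K`, at a level
`L` above all these families, forms a segment of its own once the old segments are continued up
to level `L` through nodes where every `cᵢ` vanishes; hence `‖cᵢ ± e t₀‖ ≳ ‖cᵢ‖ + 1`, and so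
`‖xᵢ ± y‖ ≈ 2` for `y = e t₀`. Functionals norming `xᵢ + y` and `xᵢ - y` lie in the slices and
differ by about `2` at `y`, so their convex combinations are almost `2` apart.
-/

open Metric

/-- A segment in the tree `T` of finite sequences of naturals: a finite subset totally
ordered under the prefix (extension) order. -/
def SegL (S : Finset (List ℕ)) : Prop :=
  ∀ s ∈ S, ∀ t ∈ S, s <+: t ∨ t <+: s

/-- An `n–m` segment: a nonempty segment whose least element has level (length) `n` and
whose greatest element has level `m`. -/
def IsNMSeg (S : Finset (List ℕ)) (n m : ℕ) : Prop :=
  SegL S ∧ (∀ t ∈ S, n ≤ t.length ∧ t.length ≤ m) ∧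
    (∃ t ∈ S, t.length = n) ∧ (∃ t ∈ S, t.length = m)

/-- An admissible family of segments: pairwise disjoint `n–m` segments for a common pair
`n ≤ m`. -/
def AdmissibleL (F : Finset (Finset (List ℕ))) : Prop :=
  ∃ n m : ℕ, n ≤ m ∧ (∀ S ∈ F, IsNMSeg S n m) ∧
    ∀ S ∈ F, ∀ S' ∈ F, S ≠ S' → Disjoint S S'

/-- The `JH_∞` norm of a finitely supported function on `T`. -/
noncomputable def jhInfNorm (x : (List ℕ) →₀ ℝ) : ℝ :=
  sSup {r : ℝ | ∃ F : Finset (Finset (List ℕ)), AdmissibleL F ∧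
    r = ∑ S ∈ F, |∑ t ∈ S, x t|}

def jhValue (x : List ℕ →₀ ℝ) (F : Finset (Finset (List ℕ))) : ℝ :=
  ∑ S ∈ F, |∑ t ∈ S, x t|

def IsAdmissibleAt (F : Finset (Finset (List ℕ))) (n m : ℕ) : Prop :=
  (∀ S ∈ F, IsNMSeg S n m) ∧ (F : Set (Finset (List ℕ))).PairwiseDisjoint id

lemma IsAdmissibleAt.admissibleL {F : Finset (Finset (List ℕ))} {n m : ℕ}
    (h : IsAdmissibleAt F n m) (hnm : n ≤ m) : AdmissibleL F :=
  ⟨n, m, hnm, h.1, fun _ hS _ hS' => h.2 hS hS'⟩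

lemma isAdmissibleAt_empty (n m : ℕ) : IsAdmissibleAt ∅ n m := by
  simp [IsAdmissibleAt]

lemma isAdmissibleAt_singleton {S : Finset (List ℕ)} {n m : ℕ} (h : IsNMSeg S n m) :
    IsAdmissibleAt {S} n m := by
  simpa [IsAdmissibleAt] using h

lemma jhValue_le_sum_abs (x : List ℕ →₀ ℝ) {F : Finset (Finset (List ℕ))}
    (hF : (F : Set (Finset (List ℕ))).PairwiseDisjoint id) :
    jhValue x F ≤ ∑ t ∈ x.support, |x t| :=
  calc jhValue x F ≤ ∑ S ∈ F, ∑ t ∈ S, |x t| :=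
        Finset.sum_le_sum fun S _ => Finset.abs_sum_le_sum_abs _ _
    _ = ∑ t ∈ F.biUnion id, |x t| := (Finset.sum_biUnion hF).symm
    _ = ∑ t ∈ F.biUnion id with t ∈ x.support, |x t| :=
        (Finset.sum_filter_of_ne fun t _ ht => by simpa using ht).symm
    _ ≤ ∑ t ∈ x.support, |x t| :=
        Finset.sum_le_sum_of_subset_of_nonneg (fun _ ht => (Finset.mem_filter.1 ht).2)
          fun _ _ _ => abs_nonneg _

lemma nonempty_jhValues (x : List ℕ →₀ ℝ) :
    {r : ℝ | ∃ F : Finset (Finset (List ℕ)), AdmissibleL F ∧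
      r = ∑ S ∈ F, |∑ t ∈ S, x t|}.Nonempty :=
  ⟨_, ∅, (isAdmissibleAt_empty 0 0).admissibleL le_rfl, rfl⟩

lemma bddAbove_jhValues (x : List ℕ →₀ ℝ) :
    BddAbove {r : ℝ | ∃ F : Finset (Finset (List ℕ)), AdmissibleL F ∧
      r = ∑ S ∈ F, |∑ t ∈ S, x t|} := by
  refine ⟨∑ t ∈ x.support, |x t|, ?_⟩
  rintro _ ⟨F, ⟨_, _, _, _, hF⟩, rfl⟩
  exact jhValue_le_sum_abs x fun _ hS _ hS' => hF _ hS _ hS'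

lemma jhValue_le_jhInfNorm (x : List ℕ →₀ ℝ) {F : Finset (Finset (List ℕ))}
    (hF : AdmissibleL F) : jhValue x F ≤ jhInfNorm x :=
  le_csSup (bddAbove_jhValues x) ⟨F, hF, rfl⟩

lemma jhInfNorm_le_sum_abs (x : List ℕ →₀ ℝ) : jhInfNorm x ≤ ∑ t ∈ x.support, |x t| :=
  csSup_le (nonempty_jhValues x)
    fun _ ⟨_, ⟨_, _, _, _, hF⟩, hr⟩ => hr ▸ jhValue_le_sum_abs x fun _ hS _ hS' => hF _ hS _ hS'

lemma SegL.mono {S T : Finset (List ℕ)} (hS : SegL S) (hTS : T ⊆ S) : SegL T :=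
  fun s hs t ht => hS s (hTS hs) t (hTS ht)

lemma SegL.exists_isNMSeg {S : Finset (List ℕ)} (hS : SegL S) (hne : S.Nonempty) :
    ∃ n m, IsNMSeg S n m := by
  have hne' := hne.image List.length
  obtain ⟨a, ha, ha'⟩ := Finset.mem_image.1 ((S.image List.length).min'_mem hne')
  obtain ⟨b, hb, hb'⟩ := Finset.mem_image.1 ((S.image List.length).max'_mem hne')
  exact ⟨_, _, hS, fun t ht => ⟨Finset.min'_le _ _ (Finset.mem_image_of_mem _ ht),
    Finset.le_max' _ _ (Finset.mem_image_of_mem _ ht)⟩, ⟨a, ha, ha'⟩, ⟨b, hb, hb'⟩⟩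

lemma IsNMSeg.le {S : Finset (List ℕ)} {n m : ℕ} (h : IsNMSeg S n m) : n ≤ m := by
  obtain ⟨t, ht, rfl⟩ := h.2.2.1
  exact (h.2.1 t ht).2

lemma IsNMSeg.exists_top {S : Finset (List ℕ)} {n m : ℕ} (h : IsNMSeg S n m) :
    ∃ u ∈ S, u.length = m ∧ ∀ a ∈ S, a <+: u := by
  obtain ⟨hchain, hlen, _, u, hu, rfl⟩ := h
  refine ⟨u, hu, rfl, fun a ha => (hchain a ha u hu).elim id fun hua => ?_⟩
  rw [hua.eq_of_length (le_antisymm hua.length_le (hlen a ha).2)]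

lemma isNMSeg_pair {a b : List ℕ} (h : a <+: b) : IsNMSeg {a, b} a.length b.length := by
  refine ⟨?_, ?_, ⟨a, by simp, rfl⟩, ⟨b, by simp, rfl⟩⟩
  · simp only [SegL, Finset.mem_insert, Finset.mem_singleton]
    rintro s (rfl | rfl) t (rfl | rfl) <;> simp [h]
  · simp only [Finset.mem_insert, Finset.mem_singleton]
    rintro t (rfl | rfl) <;> simp [h.length_le]

lemma nil_mem_of_isNMSeg_zero {S : Finset (List ℕ)} {m : ℕ} (h : IsNMSeg S 0 m) : [] ∈ S := by
  obtain ⟨t, ht, hlen⟩ := h.2.2.1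
  rwa [List.length_eq_zero_iff.1 hlen] at ht

lemma exists_isAdmissibleAt_lt_jhValue {x : List ℕ →₀ ℝ} (hx : x [] = 0) {r : ℝ}
    (hr : r < jhInfNorm x) :
    ∃ F n m, 1 ≤ n ∧ n ≤ m ∧ IsAdmissibleAt F n m ∧ r < jhValue x F := by
  obtain ⟨_, ⟨F, ⟨n, m, hnm, hseg, hdisj⟩, rfl⟩, hr⟩ :=
    exists_lt_of_lt_csSup (nonempty_jhValues x) hr
  have hempty (h : r < 0) : ∃ F n m, 1 ≤ n ∧ n ≤ m ∧ IsAdmissibleAt F n m ∧ r < jhValue x F :=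
    ⟨∅, 1, 1, le_rfl, le_rfl, isAdmissibleAt_empty 1 1, by simpa [jhValue] using h⟩
  rcases Nat.eq_zero_or_pos n with rfl | hn
  · obtain rfl | ⟨S, hS⟩ := F.eq_empty_or_nonempty
    · exact hempty (by simpa [jhValue] using hr)
    -- every segment contains the root, so disjointness leaves only `S`
    have hFS : F = {S} := Finset.eq_singleton_iff_unique_mem.2 ⟨hS, fun S' hS' => by
      by_contra hne
      exact Finset.disjoint_left.1 (hdisj S' hS' S hS hne)
        (nil_mem_of_isNMSeg_zero (hseg S' hS')) (nil_mem_of_isNMSeg_zero (hseg S hS))⟩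
    subst hFS
    have hsum : ∑ t ∈ S.erase [], x t = ∑ t ∈ S, x t := Finset.sum_erase _ hx
    obtain he | hne := (S.erase []).eq_empty_or_nonempty
    · exact hempty (by simpa [jhValue, ← hsum, he] using hr)
    obtain ⟨n', m', hT⟩ := ((hseg S (by simp)).1.mono (S.erase_subset [])).exists_isNMSeg hne
    obtain ⟨t, ht, rfl⟩ := hT.2.2.1
    refine ⟨_, _, _, ?_, hT.le, isAdmissibleAt_singleton hT, by simpa [jhValue, hsum] using hr⟩
    exact List.length_pos_iff.2 (Finset.ne_of_mem_erase ht)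
  · exact ⟨F, n, m, hn, hnm, ⟨hseg, fun _ hS _ hS' => hdisj _ hS _ hS'⟩, hr⟩

def extendSeg (w : List ℕ) (m : ℕ) (S : Finset (List ℕ)) : Finset (List ℕ) :=
  S ∪ (S.filter (·.length = m)).image (· ++ w)

lemma mem_extendSeg {w : List ℕ} {m : ℕ} {S : Finset (List ℕ)} {x : List ℕ} :
    x ∈ extendSeg w m S ↔ x ∈ S ∨ ∃ u ∈ S, u.length = m ∧ u ++ w = x := by
  simp [extendSeg, and_assoc]

lemma IsNMSeg.extendSeg {S : Finset (List ℕ)} {n m : ℕ} (h : IsNMSeg S n m) (w : List ℕ) :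
    IsNMSeg (extendSeg w m S) n (m + w.length) := by
  obtain ⟨u, hu, hul, hutop⟩ := h.exists_top
  have hnew : ∀ v ∈ S, v.length = m → v = u := fun v hv hvl =>
    (hutop v hv).eq_of_length (hvl.trans hul.symm)
  have hmem : ∀ x ∈ _root_.extendSeg w m S, x ∈ S ∨ x = u ++ w := by
    intro x hx
    obtain hx | ⟨v, hv, hvl, rfl⟩ := mem_extendSeg.1 hx
    · exact .inl hx
    · exact .inr (by rw [hnew v hv hvl])
  have hbelow : ∀ a ∈ S, a <+: u ++ w := fun a ha => (hutop a ha).trans (List.prefix_append u w)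
  obtain ⟨hchain, hlen, hbot, -⟩ := h
  refine ⟨?_, ?_, ?_, u ++ w, mem_extendSeg.2 (.inr ⟨u, hu, hul, rfl⟩), by simp [hul]⟩
  · intro a ha b hb
    rcases hmem a ha with ha | rfl <;> rcases hmem b hb with hb | rfl
    exacts [hchain a ha b hb, .inl (hbelow a ha), .inr (hbelow b hb), .inl (List.prefix_refl _)]
  · intro x hx
    rcases hmem x hx with hx | rfl
    · have := hlen x hx
      constructor <;> omega
    · have := hlen u hu
      simp only [List.length_append]
      constructor <;> omega
  · obtain ⟨s, hs, hsl⟩ := hbot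
    exact ⟨s, mem_extendSeg.2 (.inl hs), hsl⟩

lemma disjoint_extendSeg {w : List ℕ} (hw : w ≠ []) {m : ℕ} {S S' : Finset (List ℕ)}
    (hS : ∀ t ∈ S, t.length ≤ m) (hS' : ∀ t ∈ S', t.length ≤ m) (h : Disjoint S S') :
    Disjoint (extendSeg w m S) (extendSeg w m S') := by
  have hw' : 0 < w.length := List.length_pos_iff.2 hw
  rw [Finset.disjoint_left]
  intro x hx hx'
  rcases mem_extendSeg.1 hx with hx | ⟨u, hu, hul, rfl⟩ <;>
    rcases mem_extendSeg.1 hx' with hx' | ⟨u', hu', hul', hxu'⟩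
  · exact Finset.disjoint_left.1 h hx hx'
  · have := hS x hx
    simp only [← hxu', List.length_append] at this
    omega
  · have := hS' _ hx'
    simp only [List.length_append] at this
    omega
  · rw [List.append_cancel_right hxu'] at hu'
    exact Finset.disjoint_left.1 h hu hu'

lemma eq_nil_of_prefix_replicate {u : List ℕ} {j K : ℕ} (h : u <+: List.replicate j K)
    (hK : K ∉ u) : u = [] :=
  List.eq_nil_iff_forall_not_mem.2 fun _ ha =>
    hK (List.eq_of_mem_replicate (h.subset ha) ▸ ha)

lemma replicate_notMem_extendSeg {w : List ℕ} {m : ℕ} {S : Finset (List ℕ)} {K : ℕ}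
    (hS : ∀ t ∈ S, t ≠ [] ∧ K ∉ t) (j : ℕ) : List.replicate j K ∉ extendSeg w m S := by
  intro hj
  obtain ⟨u, hu, hpre⟩ : ∃ u ∈ S, u <+: List.replicate j K := by
    rcases mem_extendSeg.1 hj with hj | ⟨u, hu, -, hx⟩
    · exact ⟨_, hj, List.prefix_refl _⟩
    · exact ⟨u, hu, hx ▸ List.prefix_append u w⟩
  exact (hS u hu).1 (eq_nil_of_prefix_replicate hpre (hS u hu).2)

lemma sum_extendSeg {M : Type*} [AddCommMonoid M] (f : List ℕ → M) {w : List ℕ}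
    (hf : ∀ u, f (u ++ w) = 0) (m : ℕ) (S : Finset (List ℕ)) :
    ∑ t ∈ extendSeg w m S, f t = ∑ t ∈ S, f t :=
  (Finset.sum_subset Finset.subset_union_left fun t ht htS => by
    obtain ht | ⟨u, -, -, rfl⟩ := mem_extendSeg.1 ht
    exacts [absurd ht htS, hf u]).symm

lemma IsAdmissibleAt.pairwiseDisjoint_extendSeg {F : Finset (Finset (List ℕ))} {n m : ℕ}
    (hF : IsAdmissibleAt F n m) {w : List ℕ} (hw : w ≠ []) :
    (F : Set (Finset (List ℕ))).PairwiseDisjoint (extendSeg w m) := fun S hS S' hS' hne =>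
  disjoint_extendSeg hw (fun t ht => ((hF.1 S hS).2.1 t ht).2)
    (fun t ht => ((hF.1 S' hS').2.1 t ht).2) (hF.2 hS hS' hne)

lemma IsAdmissibleAt.injOn_extendSeg {F : Finset (Finset (List ℕ))} {n m : ℕ}
    (hF : IsAdmissibleAt F n m) {w : List ℕ} (hw : w ≠ []) :
    Set.InjOn (extendSeg w m) F := fun S hS S' hS' heq => by
  by_contra hne
  obtain ⟨t, ht, -⟩ := (hF.1 S hS).2.2.1
  have ht' : t ∈ extendSeg w m S := mem_extendSeg.2 (.inl ht)
  exact Finset.disjoint_left.1 (hF.pairwiseDisjoint_extendSeg hw hS hS' hne) ht' (heq ▸ ht')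

lemma IsAdmissibleAt.image_extendSeg {F : Finset (Finset (List ℕ))} {n m : ℕ}
    (hF : IsAdmissibleAt F n m) {w : List ℕ} (hw : w ≠ []) :
    IsAdmissibleAt (F.image (extendSeg w m)) n (m + w.length) := by
  refine ⟨by simpa using fun S hS => (hF.1 S hS).extendSeg w, ?_⟩
  rw [Finset.coe_image, (hF.injOn_extendSeg hw).pairwiseDisjoint_image]
  exact hF.pairwiseDisjoint_extendSeg hw

lemma IsAdmissibleAt.insert {F : Finset (Finset (List ℕ))} {n m : ℕ} (hF : IsAdmissibleAt F n m)
    {A : Finset (List ℕ)} (hA : IsNMSeg A n m) (hAF : ∀ S ∈ F, Disjoint A S) :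
    IsAdmissibleAt (insert A F) n m := by
  refine ⟨by simpa [hA] using hF.1, ?_⟩
  rw [Finset.coe_insert, Set.pairwiseDisjoint_insert]
  exact ⟨hF.2, fun S hS _ => hAF S hS⟩

lemma sum_add_single_apply (c : List ℕ →₀ ℝ) (a : List ℕ) (σ : ℝ) (T : Finset (List ℕ)) :
    ∑ t ∈ T, (c + Finsupp.single a σ) t = ∑ t ∈ T, c t + if a ∈ T then σ else 0 := by
  classical
  simp only [Finsupp.add_apply, Finset.sum_add_distrib, Finsupp.single_apply, Finset.sum_ite_eq]

/-- The construction behind the asymptotic `ℓ₁`-behaviour: the leaf `t₀ = Kᴸ` gets its own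
segment `{Kⁿ, Kᴸ}`, while every segment of `F` is continued up to level `L` by appending
`K`'s to its top, where `c` vanishes because the letter `K` is fresh. -/
theorem exists_admissibleL_jhValue_add_single (c : List ℕ →₀ ℝ) {F : Finset (Finset (List ℕ))}
    {n m L K : ℕ} (hn : 1 ≤ n) (hnm : n ≤ m) (hmL : m < L) (hF : IsAdmissibleAt F n m)
    (hKF : ∀ S ∈ F, ∀ t ∈ S, K ∉ t) (hKc : ∀ t, K ∈ t → c t = 0) (σ : ℝ) :
    ∃ F', AdmissibleL F' ∧
      jhValue (c + Finsupp.single (List.replicate L K) σ) F' = jhValue c F + |σ| := by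
  set w := List.replicate (L - m) K
  set g := extendSeg w m
  set A : Finset (List ℕ) := {List.replicate n K, List.replicate L K}
  have hKw : K ∈ w := List.mem_replicate.2 ⟨by omega, rfl⟩
  have hw : w ≠ [] := List.ne_nil_of_mem hKw
  have hwL : m + w.length = L := by simp [w]; omega
  have hrep : ∀ S ∈ F, ∀ j, List.replicate j K ∉ g S := fun S hS =>
    replicate_notMem_extendSeg fun t ht =>
      ⟨List.ne_nil_of_length_pos (((hF.1 S hS).2.1 t ht).1.trans_lt' hn), hKF S hS t ht⟩
  have hAseg : IsNMSeg A n L := by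
    simpa using isNMSeg_pair (⟨List.replicate (L - n) K, by
      rw [List.replicate_append_replicate, Nat.add_sub_cancel' (by omega)]⟩ :
        List.replicate n K <+: List.replicate L K)
  have hAnot : A ∉ F.image g := by
    simp only [Finset.mem_image, not_exists, not_and]
    exact fun S hS hSA => hrep S hS L (hSA ▸ by simp [A])
  have hF' : IsAdmissibleAt (insert A (F.image g)) n L :=
    (hwL ▸ hF.image_extendSeg hw).insert hAseg <| by
      simpa [A] using fun S hS => ⟨hrep S hS n, hrep S hS L⟩
  have hsumA : ∑ t ∈ A, c t = 0 := Finset.sum_eq_zero fun t ht => hKc t <| by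
    simp only [A, Finset.mem_insert, Finset.mem_singleton] at ht
    rcases ht with rfl | rfl <;> exact List.mem_replicate.2 ⟨by omega, rfl⟩
  have hsumg : ∀ S, ∑ t ∈ g S, c t = ∑ t ∈ S, c t :=
    sum_extendSeg c (fun u => hKc _ (List.mem_append_right u hKw)) m
  refine ⟨_, hF'.admissibleL (by omega), ?_⟩
  simp only [jhValue]
  rw [Finset.sum_insert hAnot, Finset.sum_image (hF.injOn_extendSeg hw), sum_add_single_apply,
    hsumA, if_pos (by simp [A]), zero_add, add_comm]
  congr 1
  refine Finset.sum_congr rfl fun S hS => ?_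
  rw [sum_add_single_apply, if_neg (hrep S hS L), add_zero, hsumg S]

theorem exists_lt_jhInfNorm_add_single {ι : Type*} [Fintype ι] (c : ι → List ℕ →₀ ℝ)
    (hc : ∀ i, c i [] = 0) {η : ℝ} (hη : 0 < η) :
    ∃ t₀ : List ℕ, t₀ ≠ [] ∧
      ∀ i σ, jhInfNorm (c i) + |σ| - η < jhInfNorm (c i + Finsupp.single t₀ σ) := by
  classical
  choose F n m hn hnm hF hFc using fun i =>
    exists_isAdmissibleAt_lt_jhValue (hc i) (sub_lt_self (jhInfNorm (c i)) hη)
  set B := Finset.univ.biUnion fun i => (c i).support ∪ (F i).biUnion id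
  obtain ⟨K, hK⟩ := Infinite.exists_notMem_finset (B.biUnion List.toFinset)
  have hKB : ∀ t ∈ B, K ∉ t := fun t ht hKt =>
    hK (Finset.mem_biUnion.2 ⟨t, ht, List.mem_toFinset.2 hKt⟩)
  set t₀ := List.replicate (Finset.univ.sup m + 1) K
  refine ⟨t₀, by simp [t₀], fun i σ => ?_⟩
  obtain ⟨F', hF', hval⟩ := exists_admissibleL_jhValue_add_single (c i) (hn i) (hnm i)
    (Nat.lt_add_one_of_le (Finset.le_sup (Finset.mem_univ i))) (hF i)
    (fun S hS t ht => hKB t (by simpa [B] using ⟨i, .inr ⟨S, hS, ht⟩⟩))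
    (fun t ht => by_contra fun h => hKB t (by simpa [B] using ⟨i, .inl h⟩) ht) σ
  linarith [hval ▸ jhValue_le_jhInfNorm (c i + Finsupp.single t₀ σ) hF', hFc i]

section Slices

variable {X : Type*} [NormedAddCommGroup X] [NormedSpace ℝ X]

/-- The convex combination `∑ᵢ λᵢ S(B_{X*}, xᵢ, ε)` of w*-slices of the dual unit ball. -/
def sliceCombination {ι : Type*} [Fintype ι] (lam : ι → ℝ) (xs : ι → X) (ε : ℝ) :
    Set (X →L[ℝ] ℝ) :=
  {g | ∃ z : ι → (X →L[ℝ] ℝ), (∀ i, ‖z i‖ ≤ 1 ∧ z i (xs i) > 1 - ε) ∧ g = ∑ i, lam i • z i}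

lemma ContinuousLinearMap.apply_le_opNorm_of_norm_le_one (f : X →L[ℝ] ℝ) {x : X}
    (hx : ‖x‖ ≤ 1) : f x ≤ ‖f‖ :=
  (le_abs_self _).trans ((f.le_opNorm x).trans (mul_le_of_le_one_right (norm_nonneg f) hx))

lemma exists_apply_gt_of_norm_add_gt {x y : X} (hx : ‖x‖ ≤ 1) (hy : ‖y‖ ≤ 1) {δ : ℝ}
    (h : 2 - δ < ‖x + y‖) : ∃ f : X →L[ℝ] ℝ, ‖f‖ ≤ 1 ∧ 1 - δ < f x ∧ 1 - δ < f y := by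
  obtain ⟨f, hf, hfxy⟩ := exists_dual_vector'' ℝ (x + y)
  have hfx := (f.apply_le_opNorm_of_norm_le_one hx).trans hf
  have hfy := (f.apply_le_opNorm_of_norm_le_one hy).trans hf
  rw [map_add] at hfxy
  exact ⟨f, hf, by simp at hfxy; linarith, by simp at hfxy; linarith⟩

theorem diam_sliceCombination_eq_two {ι : Type*} [Fintype ι] {lam : ι → ℝ}
    (hlam : ∀ i, 0 ≤ lam i) (hsum : ∑ i, lam i = 1) {xs : ι → X} (hxs : ∀ i, ‖xs i‖ ≤ 1)
    {ε : ℝ} (hε : 0 < ε)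
    (hfar : ∀ δ > 0, ∃ y : X, ‖y‖ ≤ 1 ∧ ∀ i, 2 - δ < ‖xs i + y‖ ∧ 2 - δ < ‖xs i - y‖) :
    diam (sliceCombination lam xs ε) = 2 := by
  have hball : sliceCombination lam xs ε ⊆ closedBall 0 1 := by
    rintro _ ⟨z, hz, rfl⟩
    exact (convex_closedBall 0 1).sum_mem (fun i _ => hlam i) hsum
      fun i _ => mem_closedBall_zero_iff.2 (hz i).1
  have hbdd := isBounded_closedBall.subset hball
  refine le_antisymm ((diam_mono hball isBounded_closedBall).trans ?_) ?_
  · simpa using diam_closedBall (x := (0 : X →L[ℝ] ℝ)) zero_le_one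
  refine le_of_forall_pos_le_add fun η hη => ?_
  set δ := min (η / 2) ε
  have hδη : δ ≤ η / 2 := min_le_left _ _
  obtain ⟨y, hy, hy'⟩ := hfar δ (by positivity)
  choose f hf hfx hfy using fun i => exists_apply_gt_of_norm_add_gt (hxs i) hy (hy' i).1
  choose g hg hgx hgy using fun i => exists_apply_gt_of_norm_add_gt (hxs i)
    ((norm_neg y).trans_le hy) (sub_eq_add_neg (xs i) y ▸ (hy' i).2)
  have hmem : ∀ z : ι → X →L[ℝ] ℝ, (∀ i, ‖z i‖ ≤ 1 ∧ 1 - δ < z i (xs i)) →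
      ∑ i, lam i • z i ∈ sliceCombination lam xs ε :=
    fun z hz => ⟨z, fun i => ⟨(hz i).1, by linarith [(hz i).2, min_le_right (η / 2) ε]⟩, rfl⟩
  set φ := ∑ i, lam i • f i - ∑ i, lam i • g i
  have hφ : 2 - 2 * δ ≤ ‖φ‖ :=
    calc 2 - 2 * δ = ∑ i, lam i * (2 - 2 * δ) := by rw [← Finset.sum_mul, hsum, one_mul]
      _ ≤ ∑ i, lam i * (f i y - g i y) := by
          refine Finset.sum_le_sum fun i _ => mul_le_mul_of_nonneg_left ?_ (hlam i)
          linarith [hfy i, hgy i, map_neg (g i) y]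
      _ = φ y := by simp [φ, Finset.sum_sub_distrib, mul_sub]
      _ ≤ ‖φ‖ := φ.apply_le_opNorm_of_norm_le_one hy
  have := dist_le_diam_of_mem hbdd (hmem f fun i => ⟨hf i, hfx i⟩) (hmem g fun i => ⟨hg i, hgx i⟩)
  rw [dist_eq_norm] at this
  linarith

end Slices

theorem exists_lt_norm_add_smul {X : Type*} [NormedAddCommGroup X] [NormedSpace ℝ X]
    {e : List ℕ → X}
    (hnorm : ∀ x : (List ℕ) →₀ ℝ, x [] = 0 → ‖∑ t ∈ x.support, x t • e t‖ = jhInfNorm x)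
    (hdense : Dense (Submodule.span ℝ (e '' {t : List ℕ | t ≠ []}) : Set X))
    {ι : Type*} [Fintype ι] (xs : ι → X) {δ : ℝ} (hδ : 0 < δ) :
    ∃ y : X, ‖y‖ ≤ 1 ∧ ∀ i σ, ‖xs i‖ + |σ| - δ < ‖xs i + σ • y‖ := by
  have hlc : ∀ x : (List ℕ) →₀ ℝ, x [] = 0 → ‖Finsupp.linearCombination ℝ e x‖ = jhInfNorm x :=
    hnorm
  have happrox : ∀ i, ∃ c : (List ℕ) →₀ ℝ, c [] = 0 ∧
      ‖xs i - Finsupp.linearCombination ℝ e c‖ < δ / 3 := fun i => by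
    obtain ⟨v, hv, hvx⟩ := Metric.mem_closure_iff.1 (hdense (xs i)) (δ / 3) (by positivity)
    obtain ⟨c, hc, rfl⟩ := (Finsupp.mem_span_image_iff_linearCombination ℝ).1 hv
    exact ⟨c, (Finsupp.mem_supported' ℝ c).1 hc [] (by simp), by rwa [← dist_eq_norm]⟩
  choose c hc0 hc using happrox
  obtain ⟨t₀, ht₀, hfar⟩ := exists_lt_jhInfNorm_add_single c hc0 (η := δ / 3) (by positivity)
  have hsingle : ∀ σ : ℝ, (Finsupp.single t₀ σ) [] = 0 := fun σ =>
    Finsupp.single_eq_of_ne' ht₀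
  refine ⟨e t₀, ?_, fun i σ => ?_⟩
  · calc ‖e t₀‖ = jhInfNorm (Finsupp.single t₀ 1) := by simpa using hlc _ (hsingle 1)
      _ ≤ 1 := (jhInfNorm_le_sum_abs _).trans (by simp)
  set v := Finsupp.linearCombination ℝ e (c i)
  have hv := hlc (c i + Finsupp.single t₀ σ) (by simp [hc0 i, hsingle])
  rw [map_add, Finsupp.linearCombination_single] at hv
  have h2 : ‖v + σ • e t₀‖ ≤ ‖xs i + σ • e t₀‖ + ‖xs i - v‖ :=
    calc ‖v + σ • e t₀‖ = ‖(xs i + σ • e t₀) - (xs i - v)‖ := by congr 1; abel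
      _ ≤ _ := norm_sub_le _ _
  linarith [norm_le_insert' (xs i) v, hfar i σ, hc i, hlc (c i) (hc0 i)]

theorem stmt14_general (X : Type*) [NormedAddCommGroup X] [NormedSpace ℝ X]
    (e : List ℕ → X)
    (hnorm : ∀ x : (List ℕ) →₀ ℝ, x [] = 0 → ‖∑ t ∈ x.support, x t • e t‖ = jhInfNorm x)
    (hdense : Dense (Submodule.span ℝ (e '' {t : List ℕ | t ≠ []}) : Set X))
    (n : ℕ)
    (lam : Fin n → ℝ) (hlam : ∀ i, 0 ≤ lam i) (hsum : ∑ i, lam i = 1)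
    (xs : Fin n → X) (hxs : ∀ i, ‖xs i‖ = 1) (ε : ℝ) (hε : 0 < ε) :
    Metric.diam {g : X →L[ℝ] ℝ | ∃ z : Fin n → (X →L[ℝ] ℝ),
      (∀ i, ‖z i‖ ≤ 1 ∧ z i (xs i) > 1 - ε) ∧ g = ∑ i, lam i • z i} = 2 := by
  refine diam_sliceCombination_eq_two hlam hsum (fun i => (hxs i).le) hε fun δ hδ => ?_
  obtain ⟨y, hy, hfar⟩ := exists_lt_norm_add_smul hnorm hdense xs hδ
  refine ⟨y, hy, fun i => ⟨?_, ?_⟩⟩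
  · simpa [hxs, one_add_one_eq_two] using hfar i 1
  · simpa [hxs, one_add_one_eq_two, sub_eq_add_neg] using hfar i (-1)

/-- The dual of the hyperplane `M` of `JH_∞` (completion of the finitely
supported functions vanishing at the root) has the w*-strong diameter two property: every
convex combination of w*-slices of `B_{M*}` has diameter `2`. -/
theorem stmt14 (X : Type*) [NormedAddCommGroup X] [NormedSpace ℝ X] [CompleteSpace X]
    (e : List ℕ → X)
    (hnorm : ∀ x : (List ℕ) →₀ ℝ, x [] = 0 → ‖∑ t ∈ x.support, x t • e t‖ = jhInfNorm x)
    (hdense : Dense (Submodule.span ℝ (e '' {t : List ℕ | t ≠ []}) : Set X))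
    (n : ℕ) (hn : 0 < n)
    (lam : Fin n → ℝ) (hlam : ∀ i, 0 ≤ lam i) (hsum : ∑ i, lam i = 1)
    (xs : Fin n → X) (hxs : ∀ i, ‖xs i‖ = 1) (ε : ℝ) (hε : 0 < ε) :
    Metric.diam {g : X →L[ℝ] ℝ | ∃ z : Fin n → (X →L[ℝ] ℝ),
      (∀ i, ‖z i‖ ≤ 1 ∧ z i (xs i) > 1 - ε) ∧ g = ∑ i, lam i • z i} = 2 :=
  stmt14_general X e hnorm hdense n lam hlam hsum xs hxs ε hε
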